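/- Let R be a positive definite Hermitian N×N matrix, h ∈ ℂ^N nonzero, and set w = h†(h h† + R)⁻¹ (a 1×N row vector). Then (w h)·(conj(w h)) / (w R w†) = h† R⁻¹ h, where w† is the conjugate transpose of w. -/

import Mathlib

/-!
Write `s = h† R⁻¹ h`. By Sherman–Morrison, `w† = (hh† + R)⁻¹ h = c • R⁻¹ h` with `c = (1 + s)⁻¹`,
so `w h = c̄ s̄` and `w R w† = c̄ c s̄`; the quotient `(c̄ s̄)(c s) / (c̄ c s̄)` is `s`.
-/

open Matrix ComplexOrder

namespace Matrix

variable {K : Type*} [Field K] {n : Type*} [Fintype n] [DecidableEq n]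

theorem det_vecMulVec_add {R : Matrix n n K} (hR : IsUnit R.det) (u v : n → K) :
    (vecMulVec u v + R).det = R.det * (1 + v ⬝ᵥ R⁻¹ *ᵥ u) := by
  rw [add_comm, vecMulVec_eq Unit, det_add_replicateCol_mul_replicateRow hR,
    det_unique (1 + _), Matrix.mul_assoc, ← replicateCol_mulVec]
  simp [replicateRow_mul_replicateCol_apply]

theorem inv_vecMulVec_add_mulVec {R : Matrix n n K} (hR : IsUnit R.det) (u v : n → K)
    (hs : 1 + v ⬝ᵥ R⁻¹ *ᵥ u ≠ 0) :
    (vecMulVec u v + R)⁻¹ *ᵥ u = (1 + v ⬝ᵥ R⁻¹ *ᵥ u)⁻¹ • R⁻¹ *ᵥ u := by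
  set A := vecMulVec u v + R
  have hA : IsUnit A.det := by
    rw [det_vecMulVec_add hR]
    exact hR.mul hs.isUnit
  have hAx : A *ᵥ (R⁻¹ *ᵥ u) = (1 + v ⬝ᵥ R⁻¹ *ᵥ u) • u := by
    rw [add_mulVec, vecMulVec_mulVec, op_smul_eq_smul, mulVec_mulVec, mul_nonsing_inv _ hR,
      one_mulVec, add_smul, one_smul, add_comm]
  let := invertibleOfIsUnitDet A hA
  refine inv_mulVec_eq_vec ?_
  rw [mulVec_smul, hAx, smul_smul, inv_mul_cancel₀ hs, one_smul]

variable [StarRing K]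

noncomputable def mmseCombiner (R : Matrix n n K) (h : n → K) : n → K :=
  star h ᵥ* (vecMulVec h (star h) + R)⁻¹

theorem star_mmseCombiner {R : Matrix n n K} (hR : R.IsHermitian) (hdet : IsUnit R.det)
    (h : n → K) (hs : 1 + star h ⬝ᵥ R⁻¹ *ᵥ h ≠ 0) :
    star (mmseCombiner R h) = (1 + star h ⬝ᵥ R⁻¹ *ᵥ h)⁻¹ • R⁻¹ *ᵥ h := by
  have hA : (vecMulVec h (star h) + R).IsHermitian :=
    .add (by rw [IsHermitian, conjTranspose_vecMulVec, star_star]) hR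
  rw [mmseCombiner, star_vecMul, star_star, hA.inv.eq, inv_vecMulVec_add_mulVec hdet _ _ hs]

theorem mmseCombiner_sinr {R : Matrix n n K} (hR : R.IsHermitian) (hdet : IsUnit R.det)
    (h : n → K) (hs : star h ⬝ᵥ R⁻¹ *ᵥ h ≠ 0) (hs₁ : 1 + star h ⬝ᵥ R⁻¹ *ᵥ h ≠ 0) :
    letI w := mmseCombiner R h
    (w ⬝ᵥ h) * starRingEnd K (w ⬝ᵥ h) / (w ⬝ᵥ R *ᵥ star w) = star h ⬝ᵥ R⁻¹ *ᵥ h := by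
  set s := star h ⬝ᵥ R⁻¹ *ᵥ h
  set c := (1 + s)⁻¹
  have hw : mmseCombiner R h = star (c • R⁻¹ *ᵥ h) := by
    rw [← star_mmseCombiner hR hdet h hs₁, star_star]
  have hRx : R *ᵥ (R⁻¹ *ᵥ h) = h := by
    rw [mulVec_mulVec, mul_nonsing_inv _ hdet, one_mulVec]
  have hx : star (R⁻¹ *ᵥ h) ⬝ᵥ h = star s := by rw [star_dotProduct]
  have hnum : mmseCombiner R h ⬝ᵥ h = star c * star s := by
    rw [hw, star_smul, smul_dotProduct, hx, smul_eq_mul]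
  have hden : mmseCombiner R h ⬝ᵥ R *ᵥ star (mmseCombiner R h) = star c * c * star s := by
    rw [hw, star_star, mulVec_smul, hRx, star_smul, smul_dotProduct, dotProduct_smul, hx]
    simp only [smul_eq_mul]; ring
  have hc : c ≠ 0 := inv_ne_zero hs₁
  simp only [hnum, hden, starRingEnd_apply, star_mul', star_star]
  field_simp [star_ne_zero.mpr hc, star_ne_zero.mpr hs]

end Matrix

theorem stmt_12 (N : ℕ) (R : Matrix (Fin N) (Fin N) ℂ) (hR : R.PosDef)
    (h : Fin N → ℂ) (hh : h ≠ 0) :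
    letI w : Fin N → ℂ := Matrix.vecMul (star h) (Matrix.vecMulVec h (star h) + R)⁻¹
    (w ⬝ᵥ h) * (starRingEnd ℂ) (w ⬝ᵥ h) / (w ⬝ᵥ R.mulVec (star w)) =
      star h ⬝ᵥ R⁻¹.mulVec h := by
  have hs : 0 < star h ⬝ᵥ R⁻¹ *ᵥ h := hR.inv.dotProduct_mulVec_pos hh
  exact mmseCombiner_sinr hR.isHermitian ((isUnit_iff_isUnit_det R).mp hR.isUnit) h hs.ne'
    (add_pos one_pos hs).ne'
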